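/- Let A ∈ ℝ^{n×m} (m ≤ n) and let B ∈ ℝ^{ℓ×m} be the output of Frequent Directions run on A with ℓ rows, so that for every unit vector x̄ ∈ ℝ^m, ‖Ax̄‖² - ‖Bx̄‖² ≤ ‖A - A_k‖_F²/(ℓ - k) for all k < ℓ. Then for any unit vector y ∈ ℝⁿ with ‖yᵀAB†B‖ = 0, one has ‖yᵀA‖² ≤ ‖A - A_k‖_F²/(ℓ - k) for all k < ℓ (including k = 0 with A₀ = 0). -/

import Mathlib

open Matrix BigOperators MeasureTheory

/-- Euclidean norm of a vector in `ℝⁿ`. -/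
noncomputable def eunorm {n : ℕ} (x : Fin n → ℝ) : ℝ := Real.sqrt (∑ i, (x i) ^ 2)

/-- Spectral (operator) norm of a real matrix: supremum of `‖A x‖` over unit vectors `x`. -/
noncomputable def specNorm {n m : ℕ} (A : Matrix (Fin n) (Fin m) ℝ) : ℝ :=
  sSup {c : ℝ | ∃ x : Fin m → ℝ, eunorm x = 1 ∧ c = eunorm (A.mulVec x)}

/-- Frobenius norm of a real matrix. -/
noncomputable def frobNorm {n m : ℕ} (A : Matrix (Fin n) (Fin m) ℝ) : ℝ :=
  Real.sqrt (∑ i, ∑ j, (A i j) ^ 2)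

/-- The four Penrose conditions: `Ad` is the Moore–Penrose pseudoinverse of `A`. -/
def IsMoorePenrose {n m : ℕ} (A : Matrix (Fin n) (Fin m) ℝ)
    (Ad : Matrix (Fin m) (Fin n) ℝ) : Prop :=
  A * Ad * A = A ∧ Ad * A * Ad = Ad ∧ (A * Ad)ᵀ = A * Ad ∧ (Ad * A)ᵀ = Ad * A

/-- `Ak` is a best rank-`k` approximation of `A` in Frobenius norm. -/
def IsBestRankApprox {n m : ℕ} (k : ℕ) (A Ak : Matrix (Fin n) (Fin m) ℝ) : Prop :=
  Ak.rank ≤ k ∧ ∀ C : Matrix (Fin n) (Fin m) ℝ, C.rank ≤ k → frobNorm (A - Ak) ≤ frobNorm (A - C)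

/-!
Write `z = yᵀA`. Since `B†B` is symmetric, `z B†B = 0` says `B†B z = 0`, hence
`B z = B B† B z = 0`. For `z ≠ 0` the unit vector `x = z / ‖z‖` therefore has `‖Bx‖ = 0`, and by
Cauchy–Schwarz `‖z‖² = ⟨y, A z⟩ ≤ ‖A z‖`, i.e. `‖z‖ ≤ ‖A x‖`; the Frequent Directions guarantee at
`x` then bounds `‖z‖²`.
-/

section eunorm

variable {n : ℕ}

lemma eunorm_nonneg (x : Fin n → ℝ) : 0 ≤ eunorm x := Real.sqrt_nonneg _

lemma eunorm_sq (x : Fin n → ℝ) : eunorm x ^ 2 = x ⬝ᵥ x := by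
  rw [eunorm, Real.sq_sqrt (by positivity)]
  simp only [dotProduct, sq]

@[simp]
lemma eunorm_zero : eunorm (0 : Fin n → ℝ) = 0 := by
  simp [eunorm]

lemma eunorm_eq_zero_iff {x : Fin n → ℝ} : eunorm x = 0 ↔ x = 0 := by
  rw [← sq_eq_zero_iff, eunorm_sq, dotProduct_self_eq_zero]

lemma eunorm_smul (a : ℝ) (x : Fin n → ℝ) : eunorm (a • x) = |a| * eunorm x := by
  simp only [eunorm, Pi.smul_apply, smul_eq_mul, mul_pow]
  rw [← Finset.mul_sum, Real.sqrt_mul (sq_nonneg a), Real.sqrt_sq_eq_abs]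

lemma eunorm_inv_smul_self {x : Fin n → ℝ} (hx : x ≠ 0) : eunorm ((eunorm x)⁻¹ • x) = 1 := by
  have hpos : 0 < eunorm x := (eunorm_nonneg x).lt_of_ne' (eunorm_eq_zero_iff.not.mpr hx)
  rw [eunorm_smul, abs_of_pos (inv_pos.mpr hpos), inv_mul_cancel₀ hpos.ne']

lemma sq_dotProduct_le (x y : Fin n → ℝ) : (x ⬝ᵥ y) ^ 2 ≤ eunorm x ^ 2 * eunorm y ^ 2 := by
  rw [eunorm_sq, eunorm_sq]
  simpa only [dotProduct, sq] using Finset.sum_mul_sq_le_sq_mul_sq Finset.univ x y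

end eunorm

lemma eunorm_vecMul_le_eunorm_mulVec_normalized {n m : ℕ} (A : Matrix (Fin n) (Fin m) ℝ)
    {y : Fin n → ℝ} (hy : eunorm y = 1) :
    eunorm (y ᵥ* A) ≤ eunorm (A *ᵥ ((eunorm (y ᵥ* A))⁻¹ • (y ᵥ* A))) := by
  set z := y ᵥ* A
  have hz : eunorm z ^ 2 ≤ eunorm (A *ᵥ z) := by
    have hdot : z ⬝ᵥ z = y ⬝ᵥ (A *ᵥ z) := by rw [dotProduct_mulVec]
    have hcs := sq_dotProduct_le y (A *ᵥ z)
    rw [hy, one_pow, one_mul, ← hdot, ← eunorm_sq] at hcs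
    exact abs_le_of_sq_le_sq' hcs (eunorm_nonneg _) |>.2
  rw [mulVec_smul, eunorm_smul, abs_inv, abs_of_nonneg (eunorm_nonneg z)]
  rcases (eunorm_nonneg z).eq_or_lt with h0 | hpos
  · simp [← h0]
  · rw [le_inv_mul_iff₀ hpos, ← sq]
    exact hz

lemma IsMoorePenrose.mulVec_eq_zero_of_vecMul_eq_zero {n m : ℕ}
    {B : Matrix (Fin n) (Fin m) ℝ} {Bd : Matrix (Fin m) (Fin n) ℝ} (hBd : IsMoorePenrose B Bd)
    {z : Fin m → ℝ} (hz : z ᵥ* (Bd * B) = 0) : B *ᵥ z = 0 := by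
  have hproj : (Bd * B) *ᵥ z = 0 := by
    rw [← hBd.2.2.2, mulVec_transpose, hz]
  rw [← hBd.1, Matrix.mul_assoc, ← mulVec_mulVec, hproj, mulVec_zero]

theorem fd_left_null_space_general {n m ℓ : ℕ}
    (A : Matrix (Fin n) (Fin m) ℝ) (B : Matrix (Fin ℓ) (Fin m) ℝ)
    (Bd : Matrix (Fin m) (Fin ℓ) ℝ) (hBd : IsMoorePenrose B Bd)
    (hFD : ∀ x : Fin m → ℝ, eunorm x = 1 → ∀ k < ℓ,
      ∀ Ak : Matrix (Fin n) (Fin m) ℝ, IsBestRankApprox k A Ak →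
        (eunorm (A.mulVec x)) ^ 2 - (eunorm (B.mulVec x)) ^ 2 ≤
          (frobNorm (A - Ak)) ^ 2 / ((ℓ : ℝ) - k))
    (y : Fin n → ℝ) (hy : eunorm y = 1)
    (hnull : eunorm (Matrix.vecMul y (A * Bd * B)) = 0) :
    ∀ k < ℓ, ∀ Ak : Matrix (Fin n) (Fin m) ℝ, IsBestRankApprox k A Ak →
      (eunorm (Matrix.vecMul y A)) ^ 2 ≤ (frobNorm (A - Ak)) ^ 2 / ((ℓ : ℝ) - k) := by
  intro k hk Ak hAk
  set z := y ᵥ* A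
  have hBz : B *ᵥ z = 0 := hBd.mulVec_eq_zero_of_vecMul_eq_zero <| by
    rw [vecMul_vecMul, ← Matrix.mul_assoc]
    exact eunorm_eq_zero_iff.mp hnull
  rcases eq_or_ne z 0 with hz | hz
  · have hℓk : (0 : ℝ) < ℓ - k := sub_pos.mpr (by exact_mod_cast hk)
    rw [hz, eunorm_zero, zero_pow two_ne_zero]
    positivity
  · set x := (eunorm z)⁻¹ • z
    have hFDx := hFD x (eunorm_inv_smul_self hz) k hk Ak hAk
    have hBx : B *ᵥ x = 0 := by rw [mulVec_smul, hBz, smul_zero]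
    rw [hBx, eunorm_zero] at hFDx
    calc eunorm z ^ 2 ≤ eunorm (A *ᵥ x) ^ 2 :=
          pow_le_pow_left₀ (eunorm_nonneg z) (eunorm_vecMul_le_eunorm_mulVec_normalized A hy) 2
      _ ≤ frobNorm (A - Ak) ^ 2 / (ℓ - k) := by simpa using hFDx

/-- If `B` satisfies the Frequent Directions guarantee for `A` (for every unit
`x̄` and `k < ℓ`, `‖Ax̄‖² - ‖Bx̄‖² ≤ ‖A - A_k‖_F²/(ℓ - k)`), then for every unit `y ∈ ℝⁿ` with
`‖yᵀAB†B‖ = 0`, `‖yᵀA‖² ≤ ‖A - A_k‖_F²/(ℓ - k)` for all `k < ℓ`. -/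
theorem fd_left_null_space {n m ℓ : ℕ} (hmn : m ≤ n)
    (A : Matrix (Fin n) (Fin m) ℝ) (B : Matrix (Fin ℓ) (Fin m) ℝ)
    (Bd : Matrix (Fin m) (Fin ℓ) ℝ) (hBd : IsMoorePenrose B Bd)
    (hFD : ∀ x : Fin m → ℝ, eunorm x = 1 → ∀ k < ℓ,
      ∀ Ak : Matrix (Fin n) (Fin m) ℝ, IsBestRankApprox k A Ak →
        (eunorm (A.mulVec x)) ^ 2 - (eunorm (B.mulVec x)) ^ 2 ≤
          (frobNorm (A - Ak)) ^ 2 / ((ℓ : ℝ) - k))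
    (y : Fin n → ℝ) (hy : eunorm y = 1)
    (hnull : eunorm (Matrix.vecMul y (A * Bd * B)) = 0) :
    ∀ k < ℓ, ∀ Ak : Matrix (Fin n) (Fin m) ℝ, IsBestRankApprox k A Ak →
      (eunorm (Matrix.vecMul y A)) ^ 2 ≤ (frobNorm (A - Ak)) ^ 2 / ((ℓ : ℝ) - k) :=
  fd_left_null_space_general A B Bd hBd hFD y hy hnull
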